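/- The bicyclic monoid M = ⟨ a, b | ab = 1 ⟩ is word hyperbolic; in fact, for the canonical choice of generators (a+b)* → M, the multiplication table determined by the regular combing R = b*a* is context-free. -/

import Mathlib

/-- Evaluation of a nonempty word in a semigroup via a map on letters;
the empty word evaluates to `none`. -/
def evalS {α S : Type*} [Semigroup S] (f : α → S) : List α → Option S
  | [] => none
  | a :: as => some (as.foldl (fun s b => s * f b) (f a))

/-- `f : α → S` determines a choice of generators `α⁺ → S`, i.e. the induced
semigroup homomorphism from the free semigroup on `α` is surjective. -/
def IsChoice {α S : Type*} [Semigroup S] (f : α → S) : Prop :=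
  ∀ s : S, ∃ w : List α, evalS f w = some s

/-- The encoding of `u#v#wʳ` as a word over `Option α`, with `none` playing the
role of the fresh symbol `#`. -/
def hashWord {α : Type*} (u v w : List α) : List (Option α) :=
  u.map some ++ none :: v.map some ++ none :: w.reverse.map some

/-- The multiplication table of the language `R` with respect to `f`:
all words `u#v#wʳ` with `u,v,w ∈ R` and `ū·v̄ = w̄`. -/
def mulTable {α S : Type*} [Semigroup S] (f : α → S) (R : Language α) :
    Language (Option α) :=
  { x | ∃ u v w, u ∈ R ∧ v ∈ R ∧ w ∈ R ∧
      (∃ su sv, evalS f u = some su ∧ evalS f v = some sv ∧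
        evalS f w = some (su * sv)) ∧ x = hashWord u v w }

/-- `R` is a combing for `S` with respect to `f`: a set of nonempty words
representing every element of `S`. -/
def IsCombing {α S : Type*} [Semigroup S] (f : α → S) (R : Language α) : Prop :=
  ([] : List α) ∉ R ∧ ∀ s : S, ∃ w ∈ R, evalS f w = some s

/-- A semigroup is word hyperbolic if for some choice of generators there is a
regular combing whose multiplication table is context-free. -/
def WordHyperbolic (S : Type*) [Semigroup S] : Prop :=
  ∃ (α : Type) (_ : Fintype α) (f : α → S), IsChoice f ∧
    ∃ R : Language α, R.IsRegular ∧ IsCombing f R ∧ (mulTable f R).IsContextFree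

/-- Evaluation of a word in a monoid via a map on letters (the induced monoid
homomorphism from the free monoid on `α`). -/
def evalM {α M : Type*} [Monoid M] (f : α → M) (w : List α) : M :=
  (w.map f).prod

/-- The monoid multiplication table of `R ⊆ Σ*` with respect to `f`. -/
def mulTableM {α M : Type*} [Monoid M] (f : α → M) (R : Language α) :
    Language (Option α) :=
  { x | ∃ u v w, u ∈ R ∧ v ∈ R ∧ w ∈ R ∧
      evalM f u * evalM f v = evalM f w ∧ x = hashWord u v w }

/-- The defining relation of the bicyclic monoid `⟨a, b ∣ ab = 1⟩`, with the
letter `0` playing the role of `a` and the letter `1` playing the role of `b`. -/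
def bicyclicRel : FreeMonoid (Fin 2) → FreeMonoid (Fin 2) → Prop :=
  fun x y => x = FreeMonoid.of 0 * FreeMonoid.of 1 ∧ y = 1

/-- The bicyclic monoid `⟨a, b ∣ ab = 1⟩`. -/
def Bicyclic : Type := PresentedMonoid bicyclicRel

instance : Monoid Bicyclic := inferInstanceAs (Monoid (PresentedMonoid bicyclicRel))

/-- The canonical generators of the bicyclic monoid. -/
def bicyclicGen : Fin 2 → Bicyclic := PresentedMonoid.of bicyclicRel

/-- The combing `R = b*a*` of the bicyclic monoid. -/
def bicyclicCombing : Language (Fin 2) :=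
  { w | ∃ i j : ℕ, w = List.replicate i 1 ++ List.replicate j 0 }



namespace CFAux
open ContextFreeGrammar


variable {T : Type} {g : ContextFreeGrammar.{0} T}

inductive DIn (g : ContextFreeGrammar.{0} T) :
    ℕ → List (Symbol T g.NT) → List (Symbol T g.NT) → Prop
  | refl (u : List (Symbol T g.NT)) : DIn g 0 u u
  | head {u v w : List (Symbol T g.NT)} {n : ℕ} :
      g.Produces u v → DIn g n v w → DIn g (n + 1) u w

lemma din_of_derives {u v : List (Symbol T g.NT)} (h : g.Derives u v) : ∃ n, DIn g n u v := by
  induction h using Relation.ReflTransGen.head_induction_on with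
  | refl => exact ⟨0, .refl _⟩
  | head hp _ ih => obtain ⟨n, hn⟩ := ih; exact ⟨n + 1, .head hp hn⟩

lemma derives_of_din {n : ℕ} {u v : List (Symbol T g.NT)} (h : DIn g n u v) : g.Derives u v := by
  induction h with
  | refl => rfl
  | head hp _ ih => exact hp.trans_derives ih

lemma din_append : ∀ {n : ℕ} {p q w : List (Symbol T g.NT)}, DIn g n (p ++ q) w →
    ∃ n₁ n₂ w₁ w₂, n₁ + n₂ = n ∧ w = w₁ ++ w₂ ∧ DIn g n₁ p w₁ ∧ DIn g n₂ q w₂ := by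
  intro n
  induction n with
  | zero =>
    intro p q w h
    cases h
    exact ⟨0, 0, p, q, rfl, rfl, .refl _, .refl _⟩
  | succ m ih =>
    intro p q w h
    cases h with
    | head hp hd =>
      obtain ⟨r, hr, hrw⟩ := hp
      obtain ⟨x, y, hxy, hv⟩ := hrw.exists_parts
      rw [List.append_assoc x] at hxy
      rcases List.append_eq_append_iff.mp hxy with ⟨t, hx, hq⟩ | ⟨t, hp', ht⟩
      · -- nonterminal inside q
        rw [hx] at hv
        rw [hv, List.append_assoc, List.append_assoc] at hd
        obtain ⟨n₁, n₂, w₁, w₂, hn, hw, h₁, h₂⟩ := ih hd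
        refine ⟨n₁, n₂ + 1, w₁, w₂, by omega, hw, h₁, .head ⟨r, hr, ?_⟩ h₂⟩
        rw [hq]
        have := r.rewrites_of_exists_parts t y
        simpa [List.append_assoc] using this
      · -- t is a prefix of [nt] ++ y
        cases t with
        | nil =>
          simp at hp' ht
          subst hp'
          rw [hv, List.append_assoc] at hd
          obtain ⟨n₁, n₂, w₁, w₂, hn, hw, h₁, h₂⟩ := ih hd
          refine ⟨n₁, n₂ + 1, w₁, w₂, by omega, hw, h₁, .head ⟨r, hr, ?_⟩ h₂⟩
          rw [← ht]
          simpa using r.rewrites_of_exists_parts [] y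
        | cons s t' =>
          obtain ⟨hs, hy⟩ : Symbol.nonterminal r.input = s ∧ y = t' ++ q := by
            constructor
            · exact (List.cons_eq_cons.mp ht).1
            · exact (List.cons_eq_cons.mp ht).2
          subst hy
          have hp'' : p = x ++ [Symbol.nonterminal r.input] ++ t' := by
            rw [hp', ← hs]; simp
          rw [show x ++ r.output ++ (t' ++ q) = (x ++ r.output ++ t') ++ q from by
            simp [List.append_assoc]] at hv
          rw [hv] at hd
          obtain ⟨n₁, n₂, w₁, w₂, hn, hw, h₁, h₂⟩ := ih hd
          refine ⟨n₁ + 1, n₂, w₁, w₂, by omega, hw, .head ⟨r, hr, ?_⟩ h₁, h₂⟩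
          rw [hp'']
          exact r.rewrites_of_exists_parts x t'

lemma din_terminals : ∀ {n : ℕ} {u : List T} {w : List (Symbol T g.NT)},
    DIn g n (u.map Symbol.terminal) w → w = u.map Symbol.terminal := by
  intro n u w h
  cases h with
  | refl => rfl
  | head hp hd =>
    exfalso
    obtain ⟨r, _, hrw⟩ := hp
    obtain ⟨x, y, hxy, -⟩ := hrw.exists_parts
    have : Symbol.nonterminal r.input ∈ u.map Symbol.terminal := by
      rw [hxy]; simp
    simp at this

lemma singleton_eq_append {a b : Symbol T g.NT} {x y : List (Symbol T g.NT)}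
    (h : x ++ [a] ++ y = ([b] : List (Symbol T g.NT))) : x = [] ∧ y = [] ∧ a = b := by
  cases x with
  | nil => simp at h ⊢; tauto
  | cons c x' =>
    exfalso
    simpa using congrArg List.length h

lemma din_nt_head {n : ℕ} {X : g.NT} {w : List (Symbol T g.NT)}
    (h : DIn g n [Symbol.nonterminal X] w) (hne : w ≠ [Symbol.nonterminal X]) :
    ∃ m r, m + 1 = n ∧ r ∈ g.rules ∧ r.input = X ∧ DIn g m r.output w := by
  cases h with
  | refl => exact absurd rfl hne
  | head hp hd =>
    obtain ⟨r, hr, hrw⟩ := hp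
    obtain ⟨x, y, hxy, hv⟩ := hrw.exists_parts
    obtain ⟨hx, hy, hin⟩ := singleton_eq_append hxy.symm
    subst hx hy
    simp at hv
    subst hv
    exact ⟨_, r, rfl, hr, Symbol.nonterminal.inj hin, hd⟩


inductive BNT : Type
  | Z | S1 | A1 | S2 | D | E | F
deriving DecidableEq

variable {T : Type} [DecidableEq T]

abbrev tm (t : T) : Symbol T BNT := Symbol.terminal t
abbrev ntm (X : BNT) : Symbol T BNT := Symbol.nonterminal X

def bRules (a b h : T) (sp ss md : List T) : List (ContextFreeRule T BNT) :=
  [⟨.Z, sp.map tm ++ [ntm .S1] ++ ss.map tm⟩,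
   ⟨.Z, sp.map tm ++ [ntm .S2] ++ ss.map tm⟩,
   ⟨.S1, [tm b, ntm .S1, tm b]⟩,
   ⟨.S1, [ntm .A1]⟩,
   ⟨.A1, [tm a, ntm .A1, tm a]⟩,
   ⟨.A1, [ntm .D, ntm .F]⟩,
   ⟨.S2, [tm b, ntm .S2, tm b]⟩,
   ⟨.S2, [ntm .D, ntm .E]⟩,
   ⟨.D, [tm a, ntm .D, tm b]⟩,
   ⟨.D, tm h :: md.map tm⟩,
   ⟨.E, [tm b, ntm .E, tm b]⟩,
   ⟨.E, [ntm .F]⟩,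
   ⟨.F, [tm a, ntm .F, tm a]⟩,
   ⟨.F, [tm h]⟩]

abbrev bGrammar (a b h : T) (sp ss md : List T) : ContextFreeGrammar T :=
  ⟨BNT, .Z, (bRules a b h sp ss md).toFinset⟩

section Helpers
variable {T : Type} {g : ContextFreeGrammar.{0} T}

lemma map_ne_nt {u : List T} {X : g.NT} : u.map Symbol.terminal ≠ [Symbol.nonterminal X] := by
  intro hh
  have : Symbol.nonterminal X ∈ u.map Symbol.terminal := by rw [hh]; simp
  simp at this

lemma map_terminal_inj {u v : List T}
    (hh : u.map (Symbol.terminal : T → Symbol T g.NT) = v.map Symbol.terminal) : u = v := by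
  exact List.map_injective_iff.mpr (fun x y hxy => Symbol.terminal.inj hxy) hh

lemma map_terminal_mid {u xs ys : List T} {w : List (Symbol T g.NT)}
    (hh : u.map Symbol.terminal = xs.map Symbol.terminal ++ w ++ ys.map Symbol.terminal) :
    ∃ u', u = xs ++ u' ++ ys ∧ w = u'.map Symbol.terminal := by
  rw [List.append_assoc] at hh
  obtain ⟨l₁, l₂, hu, h₁, h₂⟩ := List.map_eq_append_iff.mp hh
  obtain ⟨l₃, l₄, hl₂, h₃, h₄⟩ := List.map_eq_append_iff.mp h₂
  have e₁ : l₁ = xs := map_terminal_inj h₁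
  have e₄ : l₄ = ys := map_terminal_inj h₄
  exact ⟨l₃, by rw [hu, hl₂, e₁, e₄, List.append_assoc], h₃.symm⟩

lemma din_mid {m : ℕ} {xs ys : List T} {X : g.NT} {u : List T}
    (hd : DIn g m (xs.map Symbol.terminal ++ [Symbol.nonterminal X] ++ ys.map Symbol.terminal)
      (u.map Symbol.terminal)) :
    ∃ u' m', m' ≤ m ∧ u = xs ++ u' ++ ys ∧
      DIn g m' [Symbol.nonterminal X] (u'.map Symbol.terminal) := by
  obtain ⟨n₁, n₂, w₁, w₂, hn, hw, h₁, h₂⟩ := din_append hd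
  have hw₂ := din_terminals h₂
  obtain ⟨n₃, n₄, w₃, w₄, hn2, hw1, h₃, h₄⟩ := din_append h₁
  have hw₃ := din_terminals h₃
  subst hw₂ hw₃ hw1
  obtain ⟨u', hu, hw₄⟩ := map_terminal_mid hw
  subst hw₄
  exact ⟨u', n₄, by omega, hu, h₄⟩

lemma din_two {m : ℕ} {X Y : g.NT} {u : List T}
    (hd : DIn g m ([Symbol.nonterminal X] ++ [Symbol.nonterminal Y]) (u.map Symbol.terminal)) :
    ∃ u₁ u₂ m₁ m₂, m₁ ≤ m ∧ m₂ ≤ m ∧ u = u₁ ++ u₂ ∧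
      DIn g m₁ [Symbol.nonterminal X] (u₁.map Symbol.terminal) ∧
      DIn g m₂ [Symbol.nonterminal Y] (u₂.map Symbol.terminal) := by
  obtain ⟨n₁, n₂, w₁, w₂, hn, hw, h₁, h₂⟩ := din_append hd
  obtain ⟨l₁, l₂, hu, hl₁, hl₂⟩ := List.map_eq_append_iff.mp hw
  subst hu
  rw [← hl₁] at h₁
  rw [← hl₂] at h₂
  exact ⟨l₁, l₂, n₁, n₂, by omega, by omega, rfl, h₁, h₂⟩

lemma din_all_terminals {m : ℕ} {xs u : List T}
    (hd : DIn g m (xs.map Symbol.terminal) (u.map Symbol.terminal)) : u = xs :=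
  map_terminal_inj (din_terminals hd)

end Helpers

section Sets
variable (a b h : T) (sp ss md : List T)

def LF : Set (List T) := {w | ∃ l, w = List.replicate l a ++ h :: List.replicate l a}
def LD : Set (List T) := {w | ∃ k, w = List.replicate k a ++ h :: (md ++ List.replicate k b)}
def LE : Set (List T) := {w | ∃ e x, x ∈ LF a h ∧ w = List.replicate e b ++ x ++ List.replicate e b}
def LA : Set (List T) := {w | ∃ d x y, x ∈ LD a b h md ∧ y ∈ LF a h ∧
    w = List.replicate d a ++ (x ++ y) ++ List.replicate d a}
def LS1 : Set (List T) := {w | ∃ i x, x ∈ LA a b h md ∧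
    w = List.replicate i b ++ x ++ List.replicate i b}
def LS2 : Set (List T) := {w | ∃ i x y, x ∈ LD a b h md ∧ y ∈ LE a b h ∧
    w = List.replicate i b ++ (x ++ y) ++ List.replicate i b}
def LZ : Set (List T) := {w | ∃ x, (x ∈ LS1 a b h md ∨ x ∈ LS2 a b h md) ∧ w = sp ++ x ++ ss}

def LN : BNT → Set (List T)
  | .Z => LZ a b h sp ss md
  | .S1 => LS1 a b h md
  | .A1 => LA a b h md
  | .S2 => LS2 a b h md
  | .D => LD a b h md
  | .E => LE a b h
  | .F => LF a h

end Sets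
lemma rep_snoc {α : Type*} (n : ℕ) (x : α) :
    List.replicate n x ++ [x] = x :: List.replicate n x := by
  rw [← List.replicate_succ', List.replicate_succ]

theorem bSound (a b h : T) (sp ss md : List T) :
    ∀ n (X : BNT) (u : List T),
      DIn (bGrammar a b h sp ss md) n [Symbol.nonterminal X] (u.map Symbol.terminal) →
      u ∈ LN a b h sp ss md X := by
  intro n
  induction n using Nat.strong_induction_on with
  | _ n ih =>
    intro X u hdin
    obtain ⟨m, r, hm, hr, hinput, hout⟩ := din_nt_head hdin map_ne_nt
    subst hinput
    simp only [bGrammar, List.mem_toFinset, bRules, List.mem_cons, List.not_mem_nil, or_false,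
      List.mem_singleton] at hr
    rcases hr with rfl | rfl | rfl | rfl | rfl | rfl | rfl | rfl | rfl | rfl | rfl | rfl | rfl | rfl
    · -- Z → sp S1 ss
      obtain ⟨u', m', hm', rfl, hd'⟩ := din_mid hout
      exact ⟨u', Or.inl (ih m' (by omega) .S1 u' hd'), rfl⟩
    · -- Z → sp S2 ss
      obtain ⟨u', m', hm', rfl, hd'⟩ := din_mid hout
      exact ⟨u', Or.inr (ih m' (by omega) .S2 u' hd'), rfl⟩
    · -- S1 → b S1 b
      obtain ⟨u', m', hm', rfl, hd'⟩ := din_mid (xs := [b]) (ys := [b]) hout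
      obtain ⟨i, x, hx, rfl⟩ := ih m' (by omega) .S1 u' hd'
      exact ⟨i + 1, x, hx, by simp [List.replicate_succ, List.replicate_succ', List.append_assoc, rep_snoc]⟩
    · -- S1 → A1
      exact ⟨0, u, ih m (by omega) .A1 u hout, by simp⟩
    · -- A1 → a A1 a
      obtain ⟨u', m', hm', rfl, hd'⟩ := din_mid (xs := [a]) (ys := [a]) hout
      obtain ⟨d, x, y, hx, hy, rfl⟩ := ih m' (by omega) .A1 u' hd'
      exact ⟨d + 1, x, y, hx, hy,
        by simp [List.replicate_succ, List.replicate_succ', List.append_assoc, rep_snoc]⟩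
    · -- A1 → D F
      obtain ⟨u₁, u₂, m₁, m₂, h₁, h₂, rfl, hd₁, hd₂⟩ := din_two hout
      exact ⟨0, u₁, u₂, ih m₁ (by omega) .D u₁ hd₁, ih m₂ (by omega) .F u₂ hd₂, by simp⟩
    · -- S2 → b S2 b
      obtain ⟨u', m', hm', rfl, hd'⟩ := din_mid (xs := [b]) (ys := [b]) hout
      obtain ⟨i, x, y, hx, hy, rfl⟩ := ih m' (by omega) .S2 u' hd'
      exact ⟨i + 1, x, y, hx, hy,
        by simp [List.replicate_succ, List.replicate_succ', List.append_assoc, rep_snoc]⟩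
    · -- S2 → D E
      obtain ⟨u₁, u₂, m₁, m₂, h₁, h₂, rfl, hd₁, hd₂⟩ := din_two hout
      exact ⟨0, u₁, u₂, ih m₁ (by omega) .D u₁ hd₁, ih m₂ (by omega) .E u₂ hd₂, by simp⟩
    · -- D → a D b
      obtain ⟨u', m', hm', rfl, hd'⟩ := din_mid (xs := [a]) (ys := [b]) hout
      obtain ⟨k, rfl⟩ := ih m' (by omega) .D u' hd'
      exact ⟨k + 1, by simp [List.replicate_succ, List.replicate_succ', List.append_assoc, rep_snoc]⟩
    · -- D → h md
      have := din_all_terminals (xs := h :: md) hout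
      exact ⟨0, by simp [this]⟩
    · -- E → b E b
      obtain ⟨u', m', hm', rfl, hd'⟩ := din_mid (xs := [b]) (ys := [b]) hout
      obtain ⟨e, x, hx, rfl⟩ := ih m' (by omega) .E u' hd'
      exact ⟨e + 1, x, hx, by simp [List.replicate_succ, List.replicate_succ', List.append_assoc, rep_snoc]⟩
    · -- E → F
      exact ⟨0, u, ih m (by omega) .F u hout, by simp⟩
    · -- F → a F a
      obtain ⟨u', m', hm', rfl, hd'⟩ := din_mid (xs := [a]) (ys := [a]) hout
      obtain ⟨l, rfl⟩ := ih m' (by omega) .F u' hd'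
      exact ⟨l + 1, by simp [List.replicate_succ, List.replicate_succ', List.append_assoc, rep_snoc]⟩
    · -- F → h
      have := din_all_terminals (xs := [h]) hout
      exact ⟨0, by simp [this]⟩

section Complete2
variable (a b h : T) (sp ss md : List T)

local notation "G" => bGrammar a b h sp ss md

lemma mem_bRules {r : ContextFreeRule T BNT} (hr : r ∈ bRules a b h sp ss md) :
    r ∈ (G).rules := by
  simpa [bGrammar] using hr

lemma derives_rule {X : BNT} {out : List (Symbol T BNT)}
    (hr : (⟨X, out⟩ : ContextFreeRule T BNT) ∈ (G).rules) :
    (G).Derives [Symbol.nonterminal X] out :=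
  ContextFreeGrammar.Produces.single ⟨⟨X, out⟩, hr, ContextFreeRule.Rewrites.input_output⟩

lemma derives_pump {X : BNT} {c d : T}
    (hr : (⟨X, [tm c, ntm X, tm d]⟩ : ContextFreeRule T BNT) ∈ (G).rules) :
    ∀ (n : ℕ) {w : List (Symbol T BNT)}, (G).Derives [ntm X] w →
      (G).Derives [ntm X] ((List.replicate n c).map tm ++ w ++ (List.replicate n d).map tm) := by
  intro n
  induction n with
  | zero => intro w hw; simpa using hw
  | succ n ihn =>
    intro w hw
    have h1 : (G).Derives [ntm X] ([tm c] ++ [ntm X] ++ [tm d]) := derives_rule _ _ _ _ _ _ hr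
    have h2 := ((ihn hw).append_left [tm c]).append_right [tm d]
    have h3 := h1.trans h2
    have heq : ([tm c] ++ ((List.replicate n c).map tm ++ w ++ (List.replicate n d).map tm)
        ++ [tm d] : List (Symbol T BNT)) =
        (List.replicate (n + 1) c).map tm ++ w ++ (List.replicate (n + 1) d).map tm := by
      simp [List.replicate_succ, List.replicate_succ', List.append_assoc, rep_snoc]
    rw [heq] at h3
    exact h3

lemma bcompF : ∀ u ∈ LF a h, (G).Derives [ntm .F] (u.map tm) := by
  rintro u ⟨l, rfl⟩
  have base : (G).Derives [ntm .F] [tm h] :=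
    derives_rule _ _ _ _ _ _ (mem_bRules _ _ _ _ _ _ (by simp [bRules]))
  have hp := derives_pump _ _ _ _ _ _ (X := .F) (c := a) (d := a) (mem_bRules _ _ _ _ _ _ (by simp [bRules])) l base
  have heq : ((List.replicate l a ++ h :: List.replicate l a).map tm : List (Symbol T BNT)) =
      (List.replicate l a).map tm ++ [tm h] ++ (List.replicate l a).map tm := by
    simp
  rw [heq]
  exact hp

lemma bcompD : ∀ u ∈ LD a b h md, (G).Derives [ntm .D] (u.map tm) := by
  rintro u ⟨k, rfl⟩
  have base : (G).Derives [ntm .D] (tm h :: md.map tm) :=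
    derives_rule _ _ _ _ _ _ (mem_bRules _ _ _ _ _ _ (by simp [bRules]))
  have hp := derives_pump _ _ _ _ _ _ (X := .D) (c := a) (d := b) (mem_bRules _ _ _ _ _ _ (by simp [bRules])) k base
  have heq : ((List.replicate k a ++ h :: (md ++ List.replicate k b)).map tm
      : List (Symbol T BNT)) =
      (List.replicate k a).map tm ++ (tm h :: md.map tm) ++ (List.replicate k b).map tm := by
    simp
  rw [heq]
  exact hp

lemma bcompE : ∀ u ∈ LE a b h, (G).Derives [ntm .E] (u.map tm) := by
  rintro u ⟨e, x, hx, rfl⟩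
  have hF := bcompF a b h sp ss md x hx
  have base : (G).Derives [ntm .E] (x.map tm) :=
    (derives_rule _ _ _ _ _ _ (mem_bRules _ _ _ _ _ _ (by simp [bRules])
      (r := ⟨.E, [ntm .F]⟩))).trans hF
  have hp := derives_pump _ _ _ _ _ _ (X := .E) (c := b) (d := b) (mem_bRules _ _ _ _ _ _ (by simp [bRules])) e base
  simpa using hp

lemma bcompA : ∀ u ∈ LA a b h md, (G).Derives [ntm .A1] (u.map tm) := by
  rintro u ⟨d, x, y, hx, hy, rfl⟩
  have hD := bcompD a b h sp ss md x hx
  have hF := bcompF a b h sp ss md y hy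
  have base : (G).Derives [ntm .A1] ((x ++ y).map tm) := by
    have h0 : (G).Derives [ntm .A1] ([ntm .D] ++ [ntm .F]) :=
      derives_rule _ _ _ _ _ _ (mem_bRules _ _ _ _ _ _ (by simp [bRules])
        (r := ⟨.A1, [ntm .D, ntm .F]⟩))
    have h1 := hD.append_right [ntm .F]
    have h2 := hF.append_left (x.map tm)
    rw [List.map_append]
    exact (h0.trans h1).trans h2
  have hp := derives_pump _ _ _ _ _ _ (X := .A1) (c := a) (d := a) (mem_bRules _ _ _ _ _ _ (by simp [bRules])) d base
  simpa using hp

lemma bcompS1 : ∀ u ∈ LS1 a b h md, (G).Derives [ntm .S1] (u.map tm) := by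
  rintro u ⟨i, x, hx, rfl⟩
  have hA := bcompA a b h sp ss md x hx
  have base : (G).Derives [ntm .S1] (x.map tm) :=
    (derives_rule _ _ _ _ _ _ (mem_bRules _ _ _ _ _ _ (by simp [bRules])
      (r := ⟨.S1, [ntm .A1]⟩))).trans hA
  have hp := derives_pump _ _ _ _ _ _ (X := .S1) (c := b) (d := b) (mem_bRules _ _ _ _ _ _ (by simp [bRules])) i base
  simpa using hp

lemma bcompS2 : ∀ u ∈ LS2 a b h md, (G).Derives [ntm .S2] (u.map tm) := by
  rintro u ⟨i, x, y, hx, hy, rfl⟩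
  have hD := bcompD a b h sp ss md x hx
  have hE := bcompE a b h sp ss md y hy
  have base : (G).Derives [ntm .S2] ((x ++ y).map tm) := by
    have h0 : (G).Derives [ntm .S2] ([ntm .D] ++ [ntm .E]) :=
      derives_rule _ _ _ _ _ _ (mem_bRules _ _ _ _ _ _ (by simp [bRules])
        (r := ⟨.S2, [ntm .D, ntm .E]⟩))
    have h1 := hD.append_right [ntm .E]
    have h2 := hE.append_left (x.map tm)
    rw [List.map_append]
    exact (h0.trans h1).trans h2
  have hp := derives_pump _ _ _ _ _ _ (X := .S2) (c := b) (d := b) (mem_bRules _ _ _ _ _ _ (by simp [bRules])) i base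
  simpa using hp

lemma bcompZ : ∀ u ∈ LZ a b h sp ss md, (G).Derives [ntm .Z] (u.map tm) := by
  rintro u ⟨x, hx, rfl⟩
  rcases hx with hx | hx
  · have hS := bcompS1 a b h sp ss md x hx
    have h0 : (G).Derives [ntm .Z] (sp.map tm ++ [ntm .S1] ++ ss.map tm) :=
      derives_rule _ _ _ _ _ _ (mem_bRules _ _ _ _ _ _ (by simp [bRules]))
    have h1 := ((hS.append_left (sp.map tm)).append_right (ss.map tm))
    have h2 := h0.trans (by simpa [List.append_assoc] using h1)
    simpa [List.append_assoc] using h2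
  · have hS := bcompS2 a b h sp ss md x hx
    have h0 : (G).Derives [ntm .Z] (sp.map tm ++ [ntm .S2] ++ ss.map tm) :=
      derives_rule _ _ _ _ _ _ (mem_bRules _ _ _ _ _ _ (by simp [bRules]))
    have h1 := ((hS.append_left (sp.map tm)).append_right (ss.map tm))
    have h2 := h0.trans (by simpa [List.append_assoc] using h1)
    simpa [List.append_assoc] using h2

theorem bLanguage : (G).language = LZ a b h sp ss md := by
  ext w
  constructor
  · intro hw
    rw [ContextFreeGrammar.mem_language_iff] at hw
    obtain ⟨n, hdin⟩ := din_of_derives hw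
    exact bSound a b h sp ss md n .Z w hdin
  · intro hw
    rw [ContextFreeGrammar.mem_language_iff]
    exact bcompZ a b h sp ss md w hw


/-- The closed-form description of the language of the generic grammar. -/
def bFormula : Set (List T) := {w | ∃ i j k l : ℕ,
      w = sp ++ (List.replicate i b ++ List.replicate j a ++
        h :: (md ++ (List.replicate k b ++ List.replicate l a ++
          h :: (List.replicate (l + (j - k)) a ++ List.replicate (i + (k - j)) b)))) ++ ss}

set_option maxRecDepth 10000 in
/-- The language of the generic grammar, in closed form. -/
theorem bLanguage_eq_formula :
    (G).language = bFormula a b h sp ss md := by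
  rw [bLanguage]
  rw [show bFormula a b h sp ss md = {w | ∃ i j k l : ℕ,
      w = sp ++ (List.replicate i b ++ List.replicate j a ++
        h :: (md ++ (List.replicate k b ++ List.replicate l a ++
          h :: (List.replicate (l + (j - k)) a ++ List.replicate (i + (k - j)) b)))) ++ ss}
    from rfl]
  ext w
  constructor
  · rintro ⟨x, hx | hx, rfl⟩
    · obtain ⟨i, x', ⟨d, xD, yF, ⟨k, rfl⟩, ⟨l, rfl⟩, rfl⟩, rfl⟩ := hx
      refine ⟨i, d + k, k, l, ?_⟩
      have e1 : d + k - k = d := by omega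
      have e2 : k - (d + k) = 0 := by omega
      rw [e1, e2]
      simp only [List.replicate_add, List.append_assoc, List.cons_append, List.nil_append, List.append_nil, Nat.add_zero]
    · obtain ⟨i, xD, yE, ⟨j, rfl⟩, ⟨e, xF, ⟨l, rfl⟩, rfl⟩, rfl⟩ := hx
      refine ⟨i, j, j + e, l, ?_⟩
      have e1 : j - (j + e) = 0 := by omega
      have e2 : j + e - j = e := by omega
      rw [e1, e2]
      have e3 : List.replicate (i + e) b = List.replicate e b ++ List.replicate i b := by
        rw [add_comm, List.replicate_add]
      rw [e3]
      simp only [List.replicate_add, List.append_assoc, List.cons_append, List.nil_append, List.append_nil, Nat.add_zero]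
  · rintro ⟨i, j, k, l, rfl⟩
    rcases le_or_gt k j with hkj | hjk
    · refine ⟨List.replicate i b ++
        (List.replicate (j - k) a ++
        ((List.replicate k a ++ h :: (md ++ List.replicate k b)) ++
          (List.replicate l a ++ h :: List.replicate l a)) ++ List.replicate (j - k) a) ++
        List.replicate i b,
        Or.inl ⟨i, _, ⟨j - k, _, _, ⟨k, rfl⟩, ⟨l, rfl⟩, rfl⟩, rfl⟩, ?_⟩
      have e1 : k - j = 0 := by omega
      have e2 : List.replicate j a = List.replicate (j - k) a ++ List.replicate k a := by
        rw [← List.replicate_add]; congr 1; omega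
      rw [e1, e2]
      simp only [List.replicate_add, List.append_assoc, List.cons_append, List.nil_append, List.append_nil, Nat.add_zero]
    · refine ⟨List.replicate i b ++
        ((List.replicate j a ++ h :: (md ++ List.replicate j b)) ++
          (List.replicate (k - j) b ++ (List.replicate l a ++ h :: List.replicate l a) ++
            List.replicate (k - j) b)) ++ List.replicate i b,
        Or.inr ⟨i, _, _, ⟨j, rfl⟩, ⟨k - j, _, ⟨l, rfl⟩, rfl⟩, rfl⟩, ?_⟩
      have e1 : j - k = 0 := by omega
      have e2 : List.replicate k b = List.replicate j b ++ List.replicate (k - j) b := by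
        rw [← List.replicate_add]; congr 1; omega
      have e3 : List.replicate (i + (k - j)) b
          = List.replicate (k - j) b ++ List.replicate i b := by
        rw [add_comm, List.replicate_add]
      rw [e1, e2, e3]
      simp only [List.replicate_add, List.append_assoc, List.cons_append, List.nil_append, List.append_nil, Nat.add_zero]

end Complete2

end CFAux

/-- The semigroup combing `e b* a*` over `Fin 3` (`0 = a`, `1 = b`, `2 = e`). -/
def bicyclicCombing3 : Language (Fin 3) :=
  { w | ∃ i j : ℕ, w = 2 :: (List.replicate i 1 ++ List.replicate j 0) }


namespace BicyclicAux

/-- The normal-form model of the bicyclic monoid: pairs `(m, n)` standing for `b^m a^n`. -/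
@[ext] structure NFM where
  nb : ℕ
  na : ℕ

instance : Mul NFM := ⟨fun x y => ⟨x.nb + (y.nb - x.na), y.na + (x.na - y.nb)⟩⟩
instance : One NFM := ⟨⟨0, 0⟩⟩

lemma nfm_mul_def (x y : NFM) :
    x * y = ⟨x.nb + (y.nb - x.na), y.na + (x.na - y.nb)⟩ := rfl
lemma nfm_one_def : (1 : NFM) = ⟨0, 0⟩ := rfl

instance : Monoid NFM where
  mul_assoc x y z := by ext <;> simp [nfm_mul_def] <;> omega
  one_mul x := by ext <;> simp [nfm_mul_def, nfm_one_def]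
  mul_one x := by ext <;> simp [nfm_mul_def, nfm_one_def]

/-- The homomorphism from the bicyclic monoid onto its normal-form model. -/
def toNFM : Bicyclic →* NFM :=
  PresentedMonoid.lift (fun i : Fin 2 => if i = 0 then (⟨0, 1⟩ : NFM) else ⟨1, 0⟩)
    (by
      rintro x y ⟨rfl, rfl⟩
      rw [map_mul, map_one]
      simp only [FreeMonoid.lift_eval_of]
      ext <;> simp [nfm_mul_def, nfm_one_def])

lemma toNFM_gen0 : toNFM (bicyclicGen 0) = ⟨0, 1⟩ := by
  show (if (0 : Fin 2) = 0 then (⟨0, 1⟩ : NFM) else ⟨1, 0⟩) = _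
  simp

lemma toNFM_gen1 : toNFM (bicyclicGen 1) = ⟨1, 0⟩ := by
  show (if (1 : Fin 2) = 0 then (⟨0, 1⟩ : NFM) else ⟨1, 0⟩) = _
  simp

lemma nfm_pow_b (m : ℕ) : (⟨1, 0⟩ : NFM) ^ m = ⟨m, 0⟩ := by
  induction m with
  | zero => simp [nfm_one_def]
  | succ m ih => rw [pow_succ, ih]; ext <;> simp [nfm_mul_def]

lemma nfm_pow_a (n : ℕ) : (⟨0, 1⟩ : NFM) ^ n = ⟨0, n⟩ := by
  induction n with
  | zero => simp [nfm_one_def]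
  | succ n ih => rw [pow_succ, ih]; ext <;> simp [nfm_mul_def] <;> omega

lemma toNFM_norm (m n : ℕ) :
    toNFM (bicyclicGen 1 ^ m * bicyclicGen 0 ^ n) = ⟨m, n⟩ := by
  rw [map_mul, map_pow, map_pow, toNFM_gen0, toNFM_gen1, nfm_pow_a, nfm_pow_b]
  ext <;> simp [nfm_mul_def]

lemma norm_inj {m n m' n' : ℕ}
    (hh : bicyclicGen 1 ^ m * bicyclicGen 0 ^ n = bicyclicGen 1 ^ m' * bicyclicGen 0 ^ n') :
    m = m' ∧ n = n' := by
  have h2 := congrArg toNFM hh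
  rw [toNFM_norm, toNFM_norm] at h2
  exact ⟨congrArg NFM.nb h2, congrArg NFM.na h2⟩

/-- The defining relation `a * b = 1` in the bicyclic monoid. -/
lemma gen_mul_cancel : bicyclicGen 0 * bicyclicGen 1 = 1 := by
  show PresentedMonoid.mk bicyclicRel (FreeMonoid.of 0) *
    PresentedMonoid.mk bicyclicRel (FreeMonoid.of 1) = 1
  have h2 : PresentedMonoid.mk bicyclicRel (FreeMonoid.of 0 * FreeMonoid.of 1)
      = PresentedMonoid.mk bicyclicRel 1 := by
    exact Quotient.sound (ConGen.Rel.of _ _ ⟨rfl, rfl⟩)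
  rw [← map_mul, h2, map_one]

lemma pow_cancel (k : ℕ) : bicyclicGen 0 ^ k * bicyclicGen 1 ^ k = 1 := by
  induction k with
  | zero => simp
  | succ k ih =>
    rw [pow_succ, pow_succ', mul_assoc, ← mul_assoc (bicyclicGen 0), gen_mul_cancel, one_mul, ih]

lemma pow_ab (j k : ℕ) : bicyclicGen 0 ^ j * bicyclicGen 1 ^ k
    = bicyclicGen 1 ^ (k - j) * bicyclicGen 0 ^ (j - k) := by
  rcases le_total j k with hjk | hkj
  · obtain ⟨e, rfl⟩ : ∃ e, k = j + e := ⟨k - j, by omega⟩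
    rw [show j + e - j = e from by omega, show j - (j + e) = 0 from by omega, pow_zero, mul_one,
      pow_add, ← mul_assoc, pow_cancel, one_mul]
  · obtain ⟨d, rfl⟩ : ∃ d, j = k + d := ⟨j - k, by omega⟩
    rw [show k + d - k = d from by omega, show k - (k + d) = 0 from by omega, pow_zero, one_mul,
      add_comm k d, pow_add, mul_assoc, pow_cancel, mul_one]

/-- Normal-form multiplication in the bicyclic monoid. -/
lemma prod_norm (i j k l : ℕ) :
    (bicyclicGen 1 ^ i * bicyclicGen 0 ^ j) * (bicyclicGen 1 ^ k * bicyclicGen 0 ^ l)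
    = bicyclicGen 1 ^ (i + (k - j)) * bicyclicGen 0 ^ (l + (j - k)) := by
  calc (bicyclicGen 1 ^ i * bicyclicGen 0 ^ j) * (bicyclicGen 1 ^ k * bicyclicGen 0 ^ l)
      = bicyclicGen 1 ^ i * ((bicyclicGen 0 ^ j * bicyclicGen 1 ^ k) * bicyclicGen 0 ^ l) := by
        rw [mul_assoc, mul_assoc]
    _ = bicyclicGen 1 ^ i *
        ((bicyclicGen 1 ^ (k - j) * bicyclicGen 0 ^ (j - k)) * bicyclicGen 0 ^ l) := by
        rw [pow_ab]
    _ = (bicyclicGen 1 ^ i * bicyclicGen 1 ^ (k - j)) *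
        (bicyclicGen 0 ^ (j - k) * bicyclicGen 0 ^ l) := by
        rw [mul_assoc, mul_assoc]
    _ = bicyclicGen 1 ^ (i + (k - j)) * bicyclicGen 0 ^ ((j - k) + l) := by
        rw [← pow_add, ← pow_add]
    _ = bicyclicGen 1 ^ (i + (k - j)) * bicyclicGen 0 ^ (l + (j - k)) := by
        rw [add_comm (j - k) l]

lemma evalM_rep_rep {α M : Type*} [Monoid M] (f : α → M) (x y : α) (i j : ℕ) :
    evalM f (List.replicate i x ++ List.replicate j y) = f x ^ i * f y ^ j := by
  simp [evalM, List.prod_replicate]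

lemma evalM_cons {α M : Type*} [Monoid M] (f : α → M) (c : α) (w : List α) :
    evalM f (c :: w) = f c * evalM f w := by
  simp [evalM]

lemma mk_eq_evalM : ∀ l : List (Fin 2),
    PresentedMonoid.mk bicyclicRel (FreeMonoid.ofList l) = evalM bicyclicGen l := by
  intro l
  induction l with
  | nil =>
    rw [show FreeMonoid.ofList ([] : List (Fin 2)) = 1 from rfl, map_one]
    simp [evalM]
    rfl
  | cons x xs ih =>
    rw [FreeMonoid.ofList_cons, map_mul, ih, evalM_cons]
    rfl

lemma gen0_mul_norm (i j : ℕ) :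
    bicyclicGen 0 * (bicyclicGen 1 ^ i * bicyclicGen 0 ^ j)
    = bicyclicGen 1 ^ (i - 1) * bicyclicGen 0 ^ (j + (1 - i)) := by
  have h2 := prod_norm 0 1 i j
  simpa using h2

lemma gen1_mul_norm (i j : ℕ) :
    bicyclicGen 1 * (bicyclicGen 1 ^ i * bicyclicGen 0 ^ j)
    = bicyclicGen 1 ^ (1 + i) * bicyclicGen 0 ^ j := by
  have h2 := prod_norm 1 0 i j
  simpa using h2

lemma evalM_norm (l : List (Fin 2)) :
    ∃ i j : ℕ, evalM bicyclicGen l = bicyclicGen 1 ^ i * bicyclicGen 0 ^ j := by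
  induction l with
  | nil => exact ⟨0, 0, by simp [evalM]⟩
  | cons x xs ih =>
    obtain ⟨i, j, hij⟩ := ih
    rw [evalM_cons, hij]
    have hx : x = 0 ∨ x = 1 := by
      rcases x with ⟨xv, hxv⟩
      interval_cases xv
      · exact Or.inl rfl
      · exact Or.inr rfl
    rcases hx with rfl | rfl
    · exact ⟨i - 1, j + (1 - i), gen0_mul_norm i j⟩
    · exact ⟨1 + i, j, gen1_mul_norm i j⟩

lemma exists_norm (s : Bicyclic) : ∃ i j : ℕ, s = bicyclicGen 1 ^ i * bicyclicGen 0 ^ j := by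
  obtain ⟨w, rfl⟩ := PresentedMonoid.surjective_mk (rels := bicyclicRel) s
  rw [show w = FreeMonoid.ofList (FreeMonoid.toList w) from rfl, mk_eq_evalM]
  exact evalM_norm _


/-- A DFA recognizing `b* a*` over `Fin 2` (`0 = a`, `1 = b`). -/
def dfaBA : DFA (Fin 2) (Fin 3) where
  step s c :=
    if s = 0 then (if c = 1 then 0 else 1)
    else if s = 1 then (if c = 0 then 1 else 2)
    else 2
  start := 0
  accept := {s | s ≠ 2}

lemma dfaBA_dead : ∀ w : List (Fin 2), dfaBA.evalFrom 2 w = 2 := by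
  intro w
  induction w with
  | nil => rfl
  | cons c w ih =>
    rw [show dfaBA.evalFrom 2 (c :: w) = dfaBA.evalFrom (dfaBA.step 2 c) w from rfl]
    simpa [dfaBA] using ih

lemma dfaBA_state1 : ∀ w : List (Fin 2),
    dfaBA.evalFrom 1 w ≠ 2 ↔ ∃ j, w = List.replicate j 0 := by
  intro w
  induction w with
  | nil => simp
  | cons c w ih =>
    rw [show dfaBA.evalFrom 1 (c :: w) = dfaBA.evalFrom (dfaBA.step 1 c) w from rfl]
    have hc : c = 0 ∨ c = 1 := by omega
    rcases hc with rfl | rfl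
    · rw [show dfaBA.step 1 0 = 1 from rfl]
      rw [ih]
      constructor
      · rintro ⟨j, rfl⟩; exact ⟨j + 1, by simp [List.replicate_succ]⟩
      · rintro ⟨j, hj⟩
        cases j with
        | zero => simp at hj
        | succ j =>
          rw [List.replicate_succ] at hj
          exact ⟨j, (List.cons_eq_cons.mp hj).2⟩
    · rw [show dfaBA.step 1 1 = 2 from rfl]
      simp [dfaBA_dead]
      intro j hj
      cases j with
      | zero => simp at hj
      | succ j => rw [List.replicate_succ] at hj; simp at hj
lemma dfaBA_state0 : ∀ w : List (Fin 2),
    dfaBA.evalFrom 0 w ≠ 2 ↔ w ∈ bicyclicCombing := by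
  intro w
  induction w with
  | nil => simp [dfaBA]; exact ⟨0, 0, rfl⟩
  | cons c w ih =>
    rw [show dfaBA.evalFrom 0 (c :: w) = dfaBA.evalFrom (dfaBA.step 0 c) w from rfl]
    have hc : c = 0 ∨ c = 1 := by omega
    rcases hc with rfl | rfl
    · rw [show dfaBA.step 0 0 = 1 from rfl, dfaBA_state1]
      constructor
      · rintro ⟨j, rfl⟩; exact ⟨0, j + 1, by simp [List.replicate_succ]⟩
      · rintro ⟨i, j, hj⟩
        cases i with
        | succ i => rw [List.replicate_succ] at hj; simp at hj
        | zero =>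
          simp at hj
          cases j with
          | zero => simp at hj
          | succ j =>
            rw [List.replicate_succ] at hj
            exact ⟨j, (List.cons_eq_cons.mp hj).2⟩
    · rw [show dfaBA.step 0 1 = 0 from rfl, ih]
      constructor
      · rintro ⟨i, j, rfl⟩
        exact ⟨i + 1, j, by simp [List.replicate_succ]⟩
      · rintro ⟨i, j, hj⟩
        cases i with
        | zero =>
          simp at hj
          cases j with
          | zero => simp at hj
          | succ j => rw [List.replicate_succ] at hj; simp at hj
        | succ i =>
          rw [List.replicate_succ] at hj
          exact ⟨i, j, (List.cons_eq_cons.mp hj).2⟩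

theorem bicyclicCombing_regular : bicyclicCombing.IsRegular := by
  refine ⟨Fin 3, inferInstance, dfaBA, ?_⟩
  ext w
  rw [DFA.mem_accepts]
  show dfaBA.evalFrom 0 w ∈ {s : Fin 3 | s ≠ 2} ↔ _
  rw [Set.mem_setOf_eq, dfaBA_state0]


/-- A DFA recognizing `e b* a*` over `Fin 3`. -/
def dfaEBA : DFA (Fin 3) (Fin 4) where
  step s c :=
    if s = 0 then (if c = 2 then 1 else 3)
    else if s = 1 then (if c = 1 then 1 else if c = 0 then 2 else 3)
    else if s = 2 then (if c = 0 then 2 else 3)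
    else 3
  start := 0
  accept := {s | s = 1 ∨ s = 2}

lemma dfaEBA_dead : ∀ w : List (Fin 3), dfaEBA.evalFrom 3 w = 3 := by
  intro w
  induction w with
  | nil => rfl
  | cons c w ih =>
    rw [show dfaEBA.evalFrom 3 (c :: w) = dfaEBA.evalFrom (dfaEBA.step 3 c) w from rfl]
    simpa [dfaEBA] using ih

lemma dfaEBA_state2 : ∀ w : List (Fin 3),
    (dfaEBA.evalFrom 2 w = 1 ∨ dfaEBA.evalFrom 2 w = 2) ↔ ∃ j, w = List.replicate j 0 := by
  intro w
  induction w with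
  | nil => simp
  | cons c w ih =>
    rw [show dfaEBA.evalFrom 2 (c :: w) = dfaEBA.evalFrom (dfaEBA.step 2 c) w from rfl]
    have hc : c = 0 ∨ c = 1 ∨ c = 2 := by omega
    have hrepl : (∃ j, c :: w = List.replicate j 0) ↔ (c = 0 ∧ ∃ j, w = List.replicate j 0) := by
      constructor
      · rintro ⟨j, hj⟩
        cases j with
        | zero => simp at hj
        | succ j =>
          rw [List.replicate_succ] at hj
          exact ⟨(List.cons_eq_cons.mp hj).1, j, (List.cons_eq_cons.mp hj).2⟩
      · rintro ⟨rfl, j, rfl⟩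
        exact ⟨j + 1, by simp [List.replicate_succ]⟩
    rcases hc with rfl | rfl | rfl
    · rw [show dfaEBA.step 2 0 = 2 from rfl, ih, hrepl]
      simp
    · rw [show dfaEBA.step 2 1 = 3 from rfl, hrepl]
      simp [dfaEBA_dead]
    · rw [show dfaEBA.step 2 2 = 3 from rfl, hrepl]
      simp [dfaEBA_dead]

lemma dfaEBA_state1 : ∀ w : List (Fin 3),
    (dfaEBA.evalFrom 1 w = 1 ∨ dfaEBA.evalFrom 1 w = 2) ↔
      ∃ i j, w = List.replicate i 1 ++ List.replicate j 0 := by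
  intro w
  induction w with
  | nil => simp
  | cons c w ih =>
    rw [show dfaEBA.evalFrom 1 (c :: w) = dfaEBA.evalFrom (dfaEBA.step 1 c) w from rfl]
    have hc : c = 0 ∨ c = 1 ∨ c = 2 := by omega
    rcases hc with rfl | rfl | rfl
    · rw [show dfaEBA.step 1 0 = 2 from rfl, dfaEBA_state2]
      constructor
      · rintro ⟨j, rfl⟩
        exact ⟨0, j + 1, by simp [List.replicate_succ]⟩
      · rintro ⟨i, j, hj⟩
        cases i with
        | succ i => rw [List.replicate_succ] at hj; simp at hj
        | zero =>
          simp at hj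
          cases j with
          | zero => simp at hj
          | succ j =>
            rw [List.replicate_succ] at hj
            exact ⟨j, (List.cons_eq_cons.mp hj).2⟩
    · rw [show dfaEBA.step 1 1 = 1 from rfl, ih]
      constructor
      · rintro ⟨i, j, rfl⟩
        exact ⟨i + 1, j, by simp [List.replicate_succ]⟩
      · rintro ⟨i, j, hj⟩
        cases i with
        | zero =>
          simp at hj
          cases j with
          | zero => simp at hj
          | succ j => rw [List.replicate_succ] at hj; simp at hj
        | succ i =>
          rw [List.replicate_succ] at hj
          exact ⟨i, j, (List.cons_eq_cons.mp hj).2⟩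
    · rw [show dfaEBA.step 1 2 = 3 from rfl]
      simp [dfaEBA_dead]
      intro i j hj
      cases i with
      | zero =>
        simp at hj
        cases j with
        | zero => simp at hj
        | succ j => rw [List.replicate_succ] at hj; simp at hj
      | succ i => rw [List.replicate_succ] at hj; simp at hj

theorem bicyclicCombing3_regular : bicyclicCombing3.IsRegular := by
  refine ⟨Fin 4, inferInstance, dfaEBA, ?_⟩
  ext w
  rw [DFA.mem_accepts]
  show dfaEBA.evalFrom 0 w ∈ {s : Fin 4 | s = 1 ∨ s = 2} ↔ _
  rw [Set.mem_setOf_eq]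
  cases w with
  | nil =>
    simp [dfaEBA]
    rintro ⟨i, j, h⟩
    simp at h
  | cons c w =>
    rw [show dfaEBA.evalFrom 0 (c :: w) = dfaEBA.evalFrom (dfaEBA.step 0 c) w from rfl]
    have hc : c = 0 ∨ c = 1 ∨ c = 2 := by omega
    have hmem : (c :: w ∈ bicyclicCombing3) ↔
        (c = 2 ∧ ∃ i j, w = List.replicate i 1 ++ List.replicate j 0) := by
      constructor
      · rintro ⟨i, j, hj⟩
        exact ⟨(List.cons_eq_cons.mp hj).1, i, j, (List.cons_eq_cons.mp hj).2⟩
      · rintro ⟨rfl, i, j, rfl⟩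
        exact ⟨i, j, rfl⟩
    rcases hc with rfl | rfl | rfl
    · rw [show dfaEBA.step 0 0 = 3 from rfl, hmem]
      simp [dfaEBA_dead]
    · rw [show dfaEBA.step 0 1 = 3 from rfl, hmem]
      simp [dfaEBA_dead]
    · rw [show dfaEBA.step 0 2 = 1 from rfl, hmem, dfaEBA_state1]
      simp


end BicyclicAux

/-- The extra generator map `0 ↦ a`, `1 ↦ b`, `2 ↦ 1` used for the semigroup version. -/
def gen3 : Fin 3 → Bicyclic :=
  fun c => if c = 0 then bicyclicGen 0 else if c = 1 then bicyclicGen 1 else 1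

namespace BicyclicAux

lemma evalS_cons_eq {α M : Type*} [Monoid M] (f : α → M) (c : α) (w : List α) :
    evalS f (c :: w) = some (evalM f (c :: w)) := by
  show some (w.foldl (fun s b => s * f b) (f c)) = _
  congr 1
  have key : ∀ (w : List α) (x : M), w.foldl (fun s b => s * f b) x = x * evalM f w := by
    intro w
    induction w with
    | nil => intro x; simp [evalM]
    | cons a as ih => intro x; rw [List.foldl_cons, ih, evalM_cons, ← mul_assoc]
  rw [key, evalM_cons]

lemma evalM_gen3_word (i j : ℕ) :
    evalM gen3 (2 :: (List.replicate i 1 ++ List.replicate j 0))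
      = bicyclicGen 1 ^ i * bicyclicGen 0 ^ j := by
  rw [evalM_cons, evalM_rep_rep]
  simp [gen3]

theorem tableM_eq : mulTableM bicyclicGen bicyclicCombing
    = CFAux.bFormula (some 0) (some 1) none [] [] [] := by
  ext x
  constructor
  · rintro ⟨u, v, w, ⟨i, j, rfl⟩, ⟨k, l, rfl⟩, ⟨m, n, rfl⟩, hprod, rfl⟩
    rw [evalM_rep_rep, evalM_rep_rep, evalM_rep_rep, prod_norm] at hprod
    obtain ⟨h1, h2⟩ := norm_inj hprod
    subst h1 h2
    refine ⟨i, j, k, l, ?_⟩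
    simp [hashWord, List.reverse_append, List.append_assoc]
  · rintro ⟨i, j, k, l, rfl⟩
    refine ⟨List.replicate i 1 ++ List.replicate j 0, List.replicate k 1 ++ List.replicate l 0,
      List.replicate (i + (k - j)) 1 ++ List.replicate (l + (j - k)) 0,
      ⟨i, j, rfl⟩, ⟨k, l, rfl⟩, ⟨_, _, rfl⟩, ?_, ?_⟩
    · rw [evalM_rep_rep, evalM_rep_rep, evalM_rep_rep, prod_norm]
    · simp [hashWord, List.reverse_append, List.append_assoc]

theorem tableS_eq : mulTable gen3 bicyclicCombing3
    = CFAux.bFormula (some 0) (some 1) none [some 2] [some 2] [some 2] := by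
  ext x
  constructor
  · rintro ⟨u, v, w, ⟨i, j, rfl⟩, ⟨k, l, rfl⟩, ⟨m, n, rfl⟩, ⟨su, sv, hsu, hsv, hsw⟩, rfl⟩
    rw [evalS_cons_eq, evalM_gen3_word] at hsu hsv hsw
    have hsu' := Option.some.inj hsu
    have hsv' := Option.some.inj hsv
    have hsw' := Option.some.inj hsw
    rw [← hsu', ← hsv', prod_norm] at hsw'
    obtain ⟨h1, h2⟩ := norm_inj hsw'
    subst h1 h2
    refine ⟨i, j, k, l, ?_⟩
    simp [hashWord, List.reverse_append, List.append_assoc]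
  · rintro ⟨i, j, k, l, rfl⟩
    refine ⟨2 :: (List.replicate i 1 ++ List.replicate j 0),
      2 :: (List.replicate k 1 ++ List.replicate l 0),
      2 :: (List.replicate (i + (k - j)) 1 ++ List.replicate (l + (j - k)) 0),
      ⟨i, j, rfl⟩, ⟨k, l, rfl⟩, ⟨_, _, rfl⟩,
      ⟨bicyclicGen 1 ^ i * bicyclicGen 0 ^ j, bicyclicGen 1 ^ k * bicyclicGen 0 ^ l,
        ?_, ?_, ?_⟩, ?_⟩
    · rw [evalS_cons_eq, evalM_gen3_word]
    · rw [evalS_cons_eq, evalM_gen3_word]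
    · rw [evalS_cons_eq, evalM_gen3_word, prod_norm]
    · simp [hashWord, List.reverse_append, List.append_assoc]

end BicyclicAux

/-- The bicyclic monoid `⟨a, b ∣ ab = 1⟩` is word hyperbolic; in fact, for the
canonical choice of generators, `R = b*a*` is a regular combing whose
multiplication table is context-free. -/
theorem bicyclic_wordHyperbolic :
    WordHyperbolic Bicyclic ∧
    Function.Surjective (evalM bicyclicGen) ∧
    bicyclicCombing.IsRegular ∧
    (∀ m : Bicyclic, ∃ w ∈ bicyclicCombing, evalM bicyclicGen w = m) ∧
    (mulTableM bicyclicGen bicyclicCombing).IsContextFree := by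
  refine ⟨?_, ?_, BicyclicAux.bicyclicCombing_regular, ?_, ?_⟩
  · -- WordHyperbolic
    refine ⟨Fin 3, inferInstance, gen3, ?_, bicyclicCombing3,
      BicyclicAux.bicyclicCombing3_regular, ⟨?_, ?_⟩, ?_⟩
    · intro s
      obtain ⟨i, j, rfl⟩ := BicyclicAux.exists_norm s
      exact ⟨2 :: (List.replicate i 1 ++ List.replicate j 0),
        by rw [BicyclicAux.evalS_cons_eq, BicyclicAux.evalM_gen3_word]⟩
    · rintro ⟨i, j, hij⟩
      simp at hij
    · intro s
      obtain ⟨i, j, rfl⟩ := BicyclicAux.exists_norm s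
      exact ⟨2 :: (List.replicate i 1 ++ List.replicate j 0), ⟨i, j, rfl⟩,
        by rw [BicyclicAux.evalS_cons_eq, BicyclicAux.evalM_gen3_word]⟩
    · exact ⟨CFAux.bGrammar (some 0) (some 1) none [some 2] [some 2] [some 2],
        (CFAux.bLanguage_eq_formula _ _ _ _ _ _).trans BicyclicAux.tableS_eq.symm⟩
  · -- surjectivity
    intro s
    obtain ⟨i, j, rfl⟩ := BicyclicAux.exists_norm s
    exact ⟨List.replicate i 1 ++ List.replicate j 0, BicyclicAux.evalM_rep_rep _ _ _ _ _⟩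
  · -- combing
    intro s
    obtain ⟨i, j, rfl⟩ := BicyclicAux.exists_norm s
    exact ⟨List.replicate i 1 ++ List.replicate j 0, ⟨i, j, rfl⟩,
      BicyclicAux.evalM_rep_rep _ _ _ _ _⟩
  · -- monoid table is context-free
    exact ⟨CFAux.bGrammar (some 0) (some 1) none [] [] [],
      (CFAux.bLanguage_eq_formula _ _ _ _ _ _).trans BicyclicAux.tableM_eq.symm⟩
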